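/- Let k ≥ 4 and let G be a graph containing a 3-cycle uvw with deg_G(u) = deg_G(v) = k−1. Then the subgraph induced by {u,v,w} is ({K4-minus-an-edge}, k)-boundary-reducible with boundary {w}. -/

import Mathlib

open Finset

/-- A proper coloring of `G` from the lists `L`. -/
def IsProperListColoring {V : Type} (G : SimpleGraph V) (L : V → Finset ℕ) (φ : V → ℕ) : Prop :=
  (∀ v, φ v ∈ L v) ∧ ∀ ⦃u v : V⦄, G.Adj u v → φ u ≠ φ v

/-- `G` is weighted `ε`-flexible for lists of size `k`. -/
def WeightedFlexible {V : Type} [Fintype V] (G : SimpleGraph V) (k : ℕ) (ε : ℝ) : Prop :=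
  ∀ L : V → Finset ℕ, (∀ v, k ≤ (L v).card) →
    ∀ w : V → ℕ → ℝ, (∀ v c, 0 ≤ w v c) → (∀ v c, c ∉ L v → w v c = 0) →
      ∃ φ : V → ℕ, IsProperListColoring G L φ ∧
        ε * (∑ v, ∑ c ∈ L v, w v c) ≤ ∑ v, w v (φ v)

/-- `G` is weakly `ε`-flexible for lists of size `k`. -/
def WeaklyFlexible {V : Type} [Fintype V] (G : SimpleGraph V) (k : ℕ) (ε : ℝ) : Prop :=
  ∀ L : V → Finset ℕ, (∀ v, k ≤ (L v).card) →
    ∀ r : V → ℕ, (∀ v, r v ∈ L v) →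
      ∃ φ : V → ℕ, IsProperListColoring G L φ ∧
        ε * (Fintype.card V : ℝ) ≤ ((Finset.univ.filter fun v => φ v = r v).card : ℝ)

/-- `G` has a drawing in the plane: vertices go to distinct points, edges to simple
continuous arcs joining their endpoints, arcs internally avoid vertices and each other. -/
def HasPlanarEmbedding {V : Type} (G : SimpleGraph V) : Prop :=
  ∃ (pos : V → ℝ × ℝ) (γ : Sym2 V → ℝ → ℝ × ℝ),
    Function.Injective pos ∧
    (∀ e ∈ G.edgeSet, ContinuousOn (γ e) (Set.Icc 0 1)) ∧
    (∀ e ∈ G.edgeSet, Set.InjOn (γ e) (Set.Icc 0 1)) ∧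
    (∀ u v : V, G.Adj u v → ({γ s(u, v) 0, γ s(u, v) 1} : Set (ℝ × ℝ)) = {pos u, pos v}) ∧
    (∀ e ∈ G.edgeSet, ∀ t ∈ Set.Ioo (0 : ℝ) 1, γ e t ∉ Set.range pos) ∧
    (∀ e ∈ G.edgeSet, ∀ f ∈ G.edgeSet, e ≠ f →
      ∀ s ∈ Set.Ioo (0 : ℝ) 1, ∀ t ∈ Set.Ioo (0 : ℝ) 1, γ e s ≠ γ f t)

/-- `G` contains a copy of the graph `p.2` as a (not necessarily induced) subgraph. -/
def ContainsCopy {V : Type} (G : SimpleGraph V) (p : (W : Type) × SimpleGraph W) : Prop :=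
  ∃ f : p.2 →g G, Function.Injective f

/-- `K₄` minus an edge (the diamond). -/
def diamondGraph : SimpleGraph (Fin 4) :=
  SimpleGraph.fromEdgeSet {s(0, 1), s(0, 2), s(0, 3), s(1, 2), s(1, 3)}

/-- The house: a `3`-cycle `0 1 4` and a `4`-cycle `0 1 2 3` sharing the edge `01`. -/
def houseGraph : SimpleGraph (Fin 5) :=
  SimpleGraph.fromEdgeSet {s(0, 1), s(1, 2), s(2, 3), s(3, 0), s(0, 4), s(1, 4)}

/-- Two triangles sharing exactly one vertex. -/
def bowtieGraph : SimpleGraph (Fin 5) :=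
  SimpleGraph.fromEdgeSet {s(0, 1), s(1, 2), s(0, 2), s(0, 3), s(3, 4), s(0, 4)}

/-- Two disjoint triangles joined by an edge. -/
def twoTrianglesEdgeGraph : SimpleGraph (Fin 6) :=
  SimpleGraph.fromEdgeSet {s(0, 1), s(1, 2), s(0, 2), s(3, 4), s(4, 5), s(3, 5), s(0, 3)}

def IsTriangle {V : Type} (G : SimpleGraph V) (a b c : V) : Prop :=
  G.Adj a b ∧ G.Adj b c ∧ G.Adj a c

/-- Any two distinct `3`-cycles of `G` are at distance at least `2`. -/
def TrianglesFarApart {V : Type} (G : SimpleGraph V) : Prop :=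
  ∀ a b c a' b' c' : V, IsTriangle G a b c → IsTriangle G a' b' c' →
    ({a, b, c} : Set V) ≠ ({a', b', c'} : Set V) →
    ∀ x ∈ ({a, b, c} : Set V), ∀ y ∈ ({a', b', c'} : Set V), x ≠ y ∧ ¬ G.Adj x y

/-- Every nonempty (induced) subgraph of `G` has a vertex of degree at most `d`. -/
def Degenerate {V : Type} (G : SimpleGraph V) [DecidableRel G.Adj] (d : ℕ) : Prop :=
  ∀ S : Finset V, S.Nonempty → ∃ v ∈ S, (S.filter fun w => G.Adj v w).card ≤ d

/-- The degree of `v` into the set `A`. -/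
def degIn {V : Type} (G : SimpleGraph V) [DecidableRel G.Adj] (A : Finset V) (v : V) : ℕ :=
  (A.filter fun w => G.Adj v w).card

/-- The graph induced by `G` on `T` is colorable from every list assignment
with list sizes at least `f`. -/
def ColorableOn {V : Type} (G : SimpleGraph V) (T : Finset V) (f : V → ℤ) : Prop :=
  ∀ L : V → Finset ℕ, (∀ v ∈ T, f v ≤ ((L v).card : ℤ)) →
    ∃ φ : V → ℕ, (∀ v ∈ T, φ v ∈ L v) ∧ ∀ u ∈ T, ∀ v ∈ T, G.Adj u v → φ u ≠ φ v

/-- The subgraph of `G` induced on `S`, together with one additional vertex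
adjacent exactly to the vertices of `I`. -/
def apexGraph {V : Type} (G : SimpleGraph V) (S I : Finset V) :
    SimpleGraph ({x // x ∈ S} ⊕ Unit) where
  Adj x y :=
    match x, y with
    | Sum.inl a, Sum.inl b => G.Adj a.1 b.1
    | Sum.inl a, Sum.inr _ => a.1 ∈ I
    | Sum.inr _, Sum.inl b => b.1 ∈ I
    | Sum.inr _, Sum.inr _ => False
  symm := by
    constructor
    rintro (a | a) (b | b) h
    · exact G.adj_symm h
    · exact h
    · exact h
    · exact h
  loopless := by
    constructor
    rintro (a | a) h
    · exact G.irrefl h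
    · exact h

/-- `I ⊆ S` is `F`-forbidding (for the subgraph of `G` induced on `S`):
the induced subgraph plus an apex over `I` contains no member of `F` as a subgraph. -/
def Forbidding {V : Type} (F : Set ((W : Type) × SimpleGraph W)) (G : SimpleGraph V)
    (S I : Finset V) : Prop :=
  ∀ p ∈ F, ¬ ContainsCopy (apexGraph G S I) p

/-- The subgraph of `G` induced on `S` is `(F,k)`-boundary-reducible with boundary `B`,
inside the ambient induced subgraph of `G` on `A` (degrees `deg_G` are measured in `A`). -/
def BoundaryReducibleIn {V : Type} [DecidableEq V] (F : Set ((W : Type) × SimpleGraph W))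
    (k : ℕ) (G : SimpleGraph V) [DecidableRel G.Adj] (A S B : Finset V) : Prop :=
  S ⊆ A ∧ B ⊂ S ∧
  (∀ v ∈ S \ B, ColorableOn G (S \ B)
      (Function.update (fun w => (k : ℤ) - degIn G A w + degIn G (S \ B) w) v 1)) ∧
  (∀ I : Finset V, I ⊆ S \ B → (I.card : ℤ) ≤ (k : ℤ) - 2 → Forbidding F G S I →
    ColorableOn G (S \ B)
      (fun w => (k : ℤ) - degIn G A w + degIn G (S \ B) w - if w ∈ I then 1 else 0))

/-- Weak `(F,k)`-boundary-reducibility, witnessed by the set `Fx = Fix(H)`. -/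
def WeakBoundaryReducibleInWith {V : Type} [DecidableEq V]
    (F : Set ((W : Type) × SimpleGraph W)) (k : ℕ) (G : SimpleGraph V) [DecidableRel G.Adj]
    (A S B Fx : Finset V) : Prop :=
  S ⊆ A ∧ B ⊂ S ∧ Fx.Nonempty ∧ Fx ⊆ S \ B ∧
  (∀ v ∈ Fx, ColorableOn G (S \ B)
      (Function.update (fun w => (k : ℤ) - degIn G A w + degIn G (S \ B) w) v 1)) ∧
  (∀ I : Finset V, I ⊆ S \ B → (I.card : ℤ) ≤ (k : ℤ) - 2 → Forbidding F G S I →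
    ColorableOn G (S \ B)
      (fun w => (k : ℤ) - degIn G A w + degIn G (S \ B) w - if w ∈ I then 1 else 0))

/-- An `(F,k,b)`-resolution of `G`: nested induced subgraphs `G_i` of `G` on the vertex
sets `A i`, where `G_i` is obtained from `G_{i-1}` by deleting `H_i - B_i` for an induced
`(F,k)`-boundary-reducible subgraph `H_i` (on vertex set `S i`) of `G_{i-1}`,
and the last graph `G_M` is itself reducible with empty boundary and has at most `b` vertices. -/
structure Resolution {V : Type} [Fintype V] [DecidableEq V]
    (F : Set ((W : Type) × SimpleGraph W)) (k b : ℕ)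
    (G : SimpleGraph V) [DecidableRel G.Adj] where
  M : ℕ
  S : ℕ → Finset V
  B : ℕ → Finset V
  A : ℕ → Finset V
  hA0 : A 0 = Finset.univ
  hAstep : ∀ i, 1 ≤ i → i ≤ M → A i = A (i - 1) \ (S i \ B i)
  avoid : ∀ p ∈ F, ¬ ContainsCopy G p
  red : ∀ i, 1 ≤ i → i ≤ M → BoundaryReducibleIn F k G (A (i - 1)) (S i) (B i)
  size : ∀ i, 1 ≤ i → i ≤ M → (S i \ B i).card ≤ b
  last : BoundaryReducibleIn F k G (A M) (A M) ∅
  lastsize : (A M).card ≤ b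

/-- A weak `(F,k,b)`-resolution of `G`; `Fx i` is the set `Fix(H_i)` for the `i`-th
reducible subgraph (`1 ≤ i ≤ M`), and `Fx 0` is the `Fix` set of the last graph `G_M`. -/
structure WeakResolution {V : Type} [Fintype V] [DecidableEq V]
    (F : Set ((W : Type) × SimpleGraph W)) (k b : ℕ)
    (G : SimpleGraph V) [DecidableRel G.Adj] where
  M : ℕ
  S : ℕ → Finset V
  B : ℕ → Finset V
  A : ℕ → Finset V
  Fx : ℕ → Finset V
  hA0 : A 0 = Finset.univ
  hAstep : ∀ i, 1 ≤ i → i ≤ M → A i = A (i - 1) \ (S i \ B i)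
  avoid : ∀ p ∈ F, ¬ ContainsCopy G p
  red : ∀ i, 1 ≤ i → i ≤ M → WeakBoundaryReducibleInWith F k G (A (i - 1)) (S i) (B i) (Fx i)
  size : ∀ i, 1 ≤ i → i ≤ M → (S i \ B i).card ≤ b
  last : WeakBoundaryReducibleInWith F k G (A M) (A M) ∅ (Fx 0)
  lastsize : (A M).card ≤ b

/-- `Fix(G)`: the union of the `Fix` sets of the reducible subgraphs of the resolution. -/
def WeakResolution.FixG {V : Type} [Fintype V] [DecidableEq V]
    {F : Set ((W : Type) × SimpleGraph W)} {k b : ℕ}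
    {G : SimpleGraph V} [DecidableRel G.Adj] (R : WeakResolution F k b G) : Finset V :=
  (Finset.range (R.M + 1)).biUnion R.Fx

/-!
Deleting the boundary `w` leaves the edge `uv`, and since `u` and `v` have degree `k - 1`
in `G` and degree `1` in `uv`, both get lists of size `2`. Fixing one endpoint's color or
shortening one list by one still leaves an edge with lists of sizes `1` and `2`, which is
colorable. Both lists are never shortened together: an apex over `u` and `v` together with
the triangle `uvw` would form a diamond.
-/

section Degree

variable {V : Type} (G : SimpleGraph V) [DecidableRel G.Adj]

theorem degIn_univ [Fintype V] (x : V) : degIn G univ x = G.degree x := by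
  rw [← SimpleGraph.card_neighborFinset_eq_degree, SimpleGraph.neighborFinset_eq_filter]
  rfl

theorem degIn_pair_left [DecidableEq V] {u v : V} (huv : G.Adj u v) : degIn G {u, v} u = 1 := by
  rw [degIn, card_eq_one]
  refine ⟨v, ?_⟩
  ext x
  simp only [mem_filter, mem_insert, mem_singleton]
  constructor
  · rintro ⟨rfl | rfl, h⟩
    exacts [absurd h (G.irrefl), rfl]
  · rintro rfl
    exact ⟨Or.inr rfl, huv⟩

theorem degIn_pair_right [DecidableEq V] {u v : V} (huv : G.Adj u v) : degIn G {u, v} v = 1 := by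
  rw [pair_comm]
  exact degIn_pair_left G huv.symm

end Degree

section Reducibility

variable {V : Type} [DecidableEq V] (G : SimpleGraph V)

theorem colorableOn_pair {u v : V} {f : V → ℤ} (hu : 1 ≤ f u) (hv : 1 ≤ f v)
    (htwo : 2 ≤ f u ∨ 2 ≤ f v) : ColorableOn G {u, v} f := by
  wlog hv2 : 2 ≤ f v generalizing u v
  · rw [pair_comm]
    exact this hv hu htwo.symm (htwo.resolve_right hv2)
  intro L hL
  obtain ⟨cu, hcu⟩ : (L u).Nonempty := by
    have := hL u (by simp)
    rw [← card_pos]; omega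
  obtain ⟨cv, hcv, hcvu⟩ : ∃ c ∈ L v, c ≠ cu := by
    have := hL v (by simp)
    exact exists_mem_ne (by omega) cu
  refine ⟨fun x => if x = u then cu else cv, ?_, ?_⟩
  · simp only [mem_insert, mem_singleton]
    rintro x (rfl | rfl)
    · simpa using hcu
    · split_ifs with h
      exacts [h ▸ hcu, hcv]
  · simp only [mem_insert, mem_singleton]
    rintro a (rfl | rfl) b (rfl | rfl) hab <;> simp_all [hab.ne, hab.ne', eq_comm]

variable [DecidableRel G.Adj]

theorem boundaryReducibleIn_of_sdiff_eq_pair {F : Set ((W : Type) × SimpleGraph W)} {k : ℕ}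
    {A S B : Finset V} {u v : V} (hSA : S ⊆ A) (hBS : B ⊂ S) (hSB : S \ B = {u, v})
    (huv : u ≠ v) (hu : (k : ℤ) - degIn G A u + degIn G {u, v} u = 2)
    (hv : (k : ℤ) - degIn G A v + degIn G {u, v} v = 2)
    (hF : ∀ I, Forbidding F G S I → u ∉ I ∨ v ∉ I) :
    BoundaryReducibleIn F k G A S B := by
  refine ⟨hSA, hBS, fun x hx => ?_, fun I _ _ hI => ?_⟩ <;> rw [hSB] at *
  · rcases mem_insert.1 hx with rfl | hx
    · refine colorableOn_pair G ?_ ?_ (Or.inr ?_) <;> simp [huv.symm, hv]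
    · rw [mem_singleton.1 hx]
      refine colorableOn_pair G ?_ ?_ (Or.inl ?_) <;> simp [huv, hu]
  · refine colorableOn_pair G ?_ ?_ ?_
    · simp only [hu]; split_ifs <;> norm_num
    · simp only [hv]; split_ifs <;> norm_num
    · rcases hF I hI with h | h
      exacts [Or.inl (by simp [hu, h]), Or.inr (by simp [hv, h])]

end Reducibility

theorem apexGraph_containsCopy_diamond {V : Type} [DecidableEq V] {G : SimpleGraph V}
    {u v w : V} (huv : G.Adj u v) (hvw : G.Adj v w) (huw : G.Adj u w) {S I : Finset V}
    (hS : {u, v, w} ⊆ S) (hu : u ∈ I) (hv : v ∈ I) :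
    ContainsCopy (apexGraph G S I) ⟨Fin 4, diamondGraph⟩ := by
  let embed : Fin 4 → {x // x ∈ S} ⊕ Unit :=
    ![.inl ⟨u, hS (by simp)⟩, .inl ⟨v, hS (by simp)⟩, .inl ⟨w, hS (by simp)⟩, .inr ()]
  have hinj : Function.Injective embed := by
    intro a b hab
    fin_cases a <;> fin_cases b <;>
      simp_all [embed, huv.ne, hvw.ne, huw.ne, huv.ne', hvw.ne', huw.ne']
  refine ⟨⟨embed, ?_⟩, hinj⟩
  intro a b hab
  fin_cases a <;> fin_cases b <;>
    simp_all [embed, diamondGraph, apexGraph, SimpleGraph.fromEdgeSet_adj, G.adj_comm]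

theorem triangle_reducible {V : Type} [Fintype V] [DecidableEq V]
    (G : SimpleGraph V) [DecidableRel G.Adj] (k : ℕ) (hk : 4 ≤ k)
    (u v w : V) (huv : G.Adj u v) (hvw : G.Adj v w) (huw : G.Adj u w)
    (hdu : G.degree u = k - 1) (hdv : G.degree v = k - 1) :
    BoundaryReducibleIn ({⟨Fin 4, diamondGraph⟩} : Set ((W : Type) × SimpleGraph W)) k G
      Finset.univ {u, v, w} {w} := by
  have hSB : ({u, v, w} : Finset V) \ {w} = {u, v} := by
    ext x
    by_cases hx : x = w <;> simp [hx, huw.ne', hvw.ne']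
  have hBS : ({w} : Finset V) ⊂ {u, v, w} :=
    (ssubset_iff_of_subset (by simp)).2 ⟨u, by simp, by simpa using huw.ne⟩
  refine boundaryReducibleIn_of_sdiff_eq_pair G (subset_univ _) hBS hSB huv.ne ?_ ?_ ?_
  · rw [degIn_univ, hdu, degIn_pair_left G huv]; omega
  · rw [degIn_univ, hdv, degIn_pair_right G huv]; omega
  · intro I hI
    by_contra! h
    exact hI _ rfl (apexGraph_containsCopy_diamond huv hvw huw subset_rfl h.1 h.2)
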